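/- Let X be a real m×m positive semidefinite matrix with rank(X) ≤ m₁ ≤ m. Then X ⪯ I_m if and only if for every m×m₁ matrix B with Bᵀ B = I_{m₁}, one has Bᵀ X B ⪯ I_{m₁}. -/

import Mathlib

/-!
Conjugating `1 - X ⪰ 0` by an isometry `B` gives `1 - Bᵀ X B ⪰ 0`. Conversely, every unit vector
`u` is a column of some isometry `B` (extend `u` to an orthonormal basis), and the corresponding
diagonal entry of `1 - Bᵀ X B` is `1 - uᵀ X u`. When `m₁ = 0` there is no such column, but then
`rank X = 0` forces `X = 0`.
-/

open Matrix

namespace Matrix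

theorem rank_eq_zero_iff {m n R : Type*} [Fintype n] [DecidableEq n] [Field R]
    {A : Matrix m n R} : A.rank = 0 ↔ A = 0 := by
  rw [rank, Submodule.finrank_eq_zero, LinearMap.range_eq_bot]
  exact toLin'.map_eq_zero_iff

variable {ι κ : Type*} [Fintype ι]

theorem transpose_mul_self_of_orthonormal [DecidableEq κ] {v : κ → EuclideanSpace ℝ ι}
    (hv : Orthonormal ℝ v) : (of fun i j ↦ v j i)ᵀ * of (fun i j ↦ v j i) = 1 := by
  simpa [← gram_eq_one_iff_orthonormal (𝕜 := ℝ),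
    gram_eq_conjTranspose_mul (EuclideanSpace.basisFun ι ℝ) v] using hv

theorem exists_transpose_mul_self_eq_one_and_col_eq [DecidableEq κ] (e : κ ↪ ι) (j : κ)
    {u : EuclideanSpace ℝ ι} (hu : ‖u‖ = 1) :
    ∃ B : Matrix ι κ ℝ, Bᵀ * B = 1 ∧ ∀ i, B i j = u i := by
  have hsingle : Orthonormal ℝ (({e j} : Set ι).domRestrict fun _ ↦ u) :=
    ⟨fun _ ↦ hu, fun a b hab ↦ absurd (Subtype.ext (a.2.trans b.2.symm)) hab⟩
  obtain ⟨b, hb⟩ := hsingle.exists_orthonormalBasis_extension_of_card_eq (by simp)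
  refine ⟨of fun i k ↦ b (e k) i, transpose_mul_self_of_orthonormal
    (b.orthonormal.comp e e.injective), fun i ↦ ?_⟩
  simp [hb (e j) rfl]

theorem PosSemidef.one_sub_transpose_mul_mul [DecidableEq ι] [Fintype κ] [DecidableEq κ]
    {X : Matrix ι ι ℝ} (h : (1 - X).PosSemidef) {B : Matrix ι κ ℝ} (hB : Bᵀ * B = 1) :
    (1 - Bᵀ * X * B).PosSemidef := by
  have := h.conjTranspose_mul_mul_same B
  rwa [conjTranspose_eq_transpose_of_trivial, Matrix.mul_sub, Matrix.sub_mul, Matrix.mul_one, hB]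
    at this

theorem transpose_mul_mul_apply_self [Fintype κ] (X : Matrix ι ι ℝ) (B : Matrix ι κ ℝ) (j : κ) :
    (Bᵀ * X * B) j j = (fun i ↦ B i j) ⬝ᵥ X *ᵥ fun i ↦ B i j := by
  simp only [mul_apply, transpose_apply, mulVec, dotProduct, Finset.sum_mul, Finset.mul_sum]
  rw [Finset.sum_comm]
  exact Finset.sum_congr rfl fun _ _ ↦ Finset.sum_congr rfl fun _ _ ↦ by ring

theorem posSemidef_one_sub_of_forall_norm_eq_one [DecidableEq ι] {X : Matrix ι ι ℝ}
    (hX : X.IsHermitian) (h : ∀ u : EuclideanSpace ℝ ι, ‖u‖ = 1 → u.ofLp ⬝ᵥ X *ᵥ u.ofLp ≤ 1) :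
    (1 - X).PosSemidef := by
  refine posSemidef_iff_dotProduct_mulVec.mpr ⟨isHermitian_one.sub hX, fun x ↦ ?_⟩
  rcases eq_or_ne x 0 with rfl | hx
  · simp
  set v : EuclideanSpace ℝ ι := WithLp.toLp 2 x
  have hv : v ≠ 0 := by simpa [v] using hx
  have hunit := h (‖v‖⁻¹ • v) (norm_smul_inv_norm hv)
  simp only [WithLp.ofLp_smul, mulVec_smul, smul_dotProduct, dotProduct_smul, smul_eq_mul,
    inv_mul_le_iff₀ (norm_pos_iff.mpr hv), mul_one, ← sq] at hunit
  have hnorm : x ⬝ᵥ x = ‖v‖ ^ 2 := by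
    rw [← real_inner_self_eq_norm_sq, EuclideanSpace.inner_toLp_toLp, star_trivial]
  simpa [sub_mulVec, dotProduct_sub, hnorm] using hunit

theorem posSemidef_one_sub_of_forall_transpose_mul_self_eq_one [DecidableEq ι] [Fintype κ]
    [DecidableEq κ] [Nonempty κ] (e : κ ↪ ι) {X : Matrix ι ι ℝ} (hX : X.IsHermitian)
    (h : ∀ B : Matrix ι κ ℝ, Bᵀ * B = 1 → (1 - Bᵀ * X * B).PosSemidef) :
    (1 - X).PosSemidef := by
  refine posSemidef_one_sub_of_forall_norm_eq_one hX fun u hu ↦ ?_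
  obtain ⟨j⟩ := ‹Nonempty κ›
  obtain ⟨B, hB, hBj⟩ := exists_transpose_mul_self_eq_one_and_col_eq e j hu
  have hjj := (h B hB).diag_nonneg (i := j)
  rw [sub_apply, one_apply_eq, transpose_mul_mul_apply_self, sub_nonneg] at hjj
  simpa only [hBj] using hjj

end Matrix

theorem stmt_4 (m m₁ : ℕ) (hm : m₁ ≤ m) (X : Matrix (Fin m) (Fin m) ℝ)
    (hX : X.PosSemidef) (hrank : X.rank ≤ m₁) :
    ((1 : Matrix (Fin m) (Fin m) ℝ) - X).PosSemidef ↔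
    ∀ B : Matrix (Fin m) (Fin m₁) ℝ, Bᵀ * B = 1 →
      ((1 : Matrix (Fin m₁) (Fin m₁) ℝ) - Bᵀ * X * B).PosSemidef := by
  refine ⟨fun h B hB ↦ h.one_sub_transpose_mul_mul hB, fun h ↦ ?_⟩
  rcases Nat.eq_zero_or_pos m₁ with rfl | hm₁
  · rw [rank_eq_zero_iff.mp (Nat.le_zero.mp hrank), sub_zero]
    exact PosSemidef.one
  · have : Nonempty (Fin m₁) := ⟨⟨0, hm₁⟩⟩
    exact posSemidef_one_sub_of_forall_transpose_mul_self_eq_one (Fin.castLEEmb hm) hX.1 h
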